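/- For all real numbers a_{11},a_{12},a_{21},a_{22},b_{11},b_{12},b_{21},b_{22}, define c_1 = (a_{11}−a_{22})(b_{11}−b_{12}), c_2 = (a_{11}−a_{21})(b_{22}−b_{11}), c_3 = (a_{12}−a_{22})(b_{11}−b_{12}), c_4 = (a_{11}−a_{21})(b_{22}−b_{21}), c_5 = (a_{12}−a_{22})(b_{21}−b_{12}), c_6 = (a_{12}−a_{21})(b_{22}−b_{21}), and c_7 = (a_{12}−a_{21})(b_{22}−b_{11}) + (a_{11}−a_{22})(b_{21}−b_{12}). Then the following two identities hold: c_1 + c_2 − c_3 − c_4 + c_5 + c_6 − c_7 = 0, and c_2c_4c_5 − c_3c_4c_5 − c_2c_3c_6 + c_4c_5c_6 + c_3c_4c_7 − c_4c_5c_7 − c_4²c_5 + c_4c_5² = 0. (The coefficient vector of every Spohn cubic lies on this hyperplane and this cubic hypersurface in ℙ⁶.) -/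
import Mathlib


/-- The coefficient vector of every Spohn cubic satisfies the
linear relation `c₁+c₂−c₃−c₄+c₅+c₆−c₇ = 0` and the cubic relation
`c₂c₄c₅−c₃c₄c₅−c₂c₃c₆+c₄c₅c₆+c₃c₄c₇−c₄c₅c₇−c₄²c₅+c₄c₅² = 0`. -/
theorem spohn_cubic_coefficient_relations
    (a11 a12 a21 a22 b11 b12 b21 b22 : ℝ)
    (c1 c2 c3 c4 c5 c6 c7 : ℝ)
    (hc1 : c1 = (a11 - a22) * (b11 - b12))
    (hc2 : c2 = (a11 - a21) * (b22 - b11))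
    (hc3 : c3 = (a12 - a22) * (b11 - b12))
    (hc4 : c4 = (a11 - a21) * (b22 - b21))
    (hc5 : c5 = (a12 - a22) * (b21 - b12))
    (hc6 : c6 = (a12 - a21) * (b22 - b21))
    (hc7 : c7 = (a12 - a21) * (b22 - b11) + (a11 - a22) * (b21 - b12)) :
    c1 + c2 - c3 - c4 + c5 + c6 - c7 = 0 ∧
    c2 * c4 * c5 - c3 * c4 * c5 - c2 * c3 * c6 + c4 * c5 * c6 + c3 * c4 * c7
      - c4 * c5 * c7 - c4 ^ 2 * c5 + c4 * c5 ^ 2 = 0 := by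
  subst hc1 hc2 hc3 hc4 hc5 hc6 hc7; constructor <;> ring
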